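/- Let M > 0, Lambda > 0, and a, Q be real numbers with K := a^2 + (1 + Lambda*a^2/3)^2 * Q^2 > 0. Define Delta_r(r) := (r^2 + a^2)(1 - Lambda*r^2/3) - 2*M*r + (1 + Lambda*a^2/3)^2 * Q^2, and set A := a^2 - 3/Lambda, C := -(3/Lambda)*K, and X± := (2/27) * ( -A^3 + 36*A*C ± (A^2 + 12*C)^(3/2) ), where x^(3/2) denotes the real power (which is well-defined since the second condition below is equivalent to A^2 + 12*C > 0). Then the following are equivalent: (i) there exist real numbers 0 < r- < r+ such that Delta_r(r-) = Delta_r(r+) = 0, Delta_r'(r-) ≠ 0, Delta_r'(r+) ≠ 0, and Delta_r(r) < 0 for all r in the open interval (r-, r+); (ii) Lambda*a^2 < 3, and 4*Lambda*(Lambda*a^2 + 3)^2 * Q^2 < Lambda^2*a^4 - 42*Lambda*a^2 + 9, and Lambda^2 * X- < 36*M^2 < Lambda^2 * X+. -/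

import Mathlib

/-!
Write `b = 1 - Λa²/3` and `K` for the constant term, so that `Δ_r(r) = -Λr⁴/3 + br² - 2Mr + K`.
For `r > 0`, `Δ_r(r) = 2r (m(r) - M)` with `m(r) = (K + br² - Λr⁴/3) / (2r)`, the mass for which
`r` is a horizon, and at a root `r Δ_r'(r) = -(Λr⁴ - br² + K)`, while `m'(r)` is this same
quantity divided by `2r²`. Negativity of `Δ_r` on `(r₋, r₊)` gives `Δ_r'(r₋) < 0 < Δ_r'(r₊)`,
which forces `Λs² - bs + K` to have two positive roots `q₁² < q₂²`, i.e. `b > 0` and `b² > 4ΛK`. Then `m` decreases on `(0, q₁]` from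
`+∞`, increases on `[q₁, q₂]`, and (i) holds exactly when `m(q₁) < M < m(q₂)`. Squaring, these
bounds become `Λ² X₋ < 36 M² < Λ² X₊`, since `Λ² X₋ = 36 m(q₁)²` and `Λ² X₊ = 36 m(q₂)²`.
-/

open Set Filter Topology

/-- The horizon function of the Kerr-Newman-de Sitter metric. -/
noncomputable def DeltaR (M Λ a Q : ℝ) (r : ℝ) : ℝ :=
  (r ^ 2 + a ^ 2) * (1 - Λ * r ^ 2 / 3) - 2 * M * r + (1 + Λ * a ^ 2 / 3) ^ 2 * Q ^ 2

theorem HasDerivAt.nonpos_of_le_on_right {f : ℝ → ℝ} {f' x y : ℝ} (hf : HasDerivAt f f' x)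
    (hxy : x < y) (hle : ∀ r ∈ Ioo x y, f r ≤ f x) : f' ≤ 0 := by
  refine le_of_tendsto ((hasDerivWithinAt_iff_tendsto_slope' self_notMem_Ioi).1
    hf.hasDerivWithinAt) ?_
  filter_upwards [Ioo_mem_nhdsGT hxy] with r hr
  rw [slope_def_field]
  exact div_nonpos_of_nonpos_of_nonneg (sub_nonpos.2 (hle r hr)) (sub_nonneg.2 hr.1.le)

theorem HasDerivAt.nonneg_of_le_on_left {f : ℝ → ℝ} {f' x y : ℝ} (hf : HasDerivAt f f' y)
    (hxy : x < y) (hle : ∀ r ∈ Ioo x y, f r ≤ f y) : 0 ≤ f' := by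
  refine ge_of_tendsto ((hasDerivWithinAt_iff_tendsto_slope' self_notMem_Iio).1
    hf.hasDerivWithinAt) ?_
  filter_upwards [Ioo_mem_nhdsLT hxy] with r hr
  rw [slope_def_field]
  exact div_nonneg_of_nonpos (sub_nonpos.2 (hle r hr)) (sub_nonpos.2 hr.2.le)

/-- Hypothesis 1 of the paper (sub-extremal interior). -/
def IsSubextremal (f : ℝ → ℝ) : Prop :=
  ∃ rm rp : ℝ, 0 < rm ∧ rm < rp ∧ f rm = 0 ∧ f rp = 0 ∧ deriv f rm ≠ 0 ∧ deriv f rp ≠ 0 ∧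
    ∀ r ∈ Ioo rm rp, f r < 0

theorem IsSubextremal.exists_deriv_neg_pos {f : ℝ → ℝ} (hf : Differentiable ℝ f)
    (h : IsSubextremal f) :
    ∃ rm rp : ℝ, 0 < rm ∧ rm < rp ∧ f rm = 0 ∧ f rp = 0 ∧ deriv f rm < 0 ∧ 0 < deriv f rp := by
  obtain ⟨rm, rp, hrm, hrmp, hfm, hfp, hdm, hdp, hneg⟩ := h
  refine ⟨rm, rp, hrm, hrmp, hfm, hfp, ?_, ?_⟩
  · exact ((hf rm).hasDerivAt.nonpos_of_le_on_right hrmp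
      fun r hr => hfm ▸ (hneg r hr).le).lt_of_ne hdm
  · exact ((hf rp).hasDerivAt.nonneg_of_le_on_left hrmp
      fun r hr => hfp ▸ (hneg r hr).le).lt_of_ne' hdp

section HorizonPoly

variable {Λ b K M r : ℝ}

noncomputable def horizonPoly (Λ b K M r : ℝ) : ℝ := -Λ / 3 * r ^ 4 + b * r ^ 2 - 2 * M * r + K

/-- The value of `M` for which `r ≠ 0` is a root of `horizonPoly Λ b K M`. -/
noncomputable def horizonMass (Λ b K r : ℝ) : ℝ := (b * r ^ 2 - Λ / 3 * r ^ 4 + K) / (2 * r)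

theorem differentiable_horizonPoly : Differentiable ℝ (horizonPoly Λ b K M) := by
  unfold horizonPoly
  fun_prop

theorem hasDerivAt_horizonPoly :
    HasDerivAt (horizonPoly Λ b K M) (-(4 * Λ / 3) * r ^ 3 + 2 * b * r - 2 * M) r := by
  refine ((((hasDerivAt_pow 4 r).const_mul (-Λ / 3)).add ((hasDerivAt_pow 2 r).const_mul b)).sub
    ((hasDerivAt_id' r).const_mul (2 * M))).add_const K |>.congr_deriv ?_
  push_cast
  ring

theorem mul_deriv_horizonPoly_of_eq_zero (h : horizonPoly Λ b K M r = 0) :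
    r * deriv (horizonPoly Λ b K M) r = -(Λ * r ^ 4 - b * r ^ 2 + K) := by
  rw [hasDerivAt_horizonPoly.deriv]
  unfold horizonPoly at h
  linear_combination h

theorem horizonPoly_eq_mul_horizonMass_sub (hr : r ≠ 0) :
    horizonPoly Λ b K M r = 2 * r * (horizonMass Λ b K r - M) := by
  unfold horizonPoly horizonMass
  field_simp
  ring

theorem horizonPoly_eq_zero_iff (hr : 0 < r) :
    horizonPoly Λ b K M r = 0 ↔ horizonMass Λ b K r = M := by
  rw [horizonPoly_eq_mul_horizonMass_sub hr.ne', mul_eq_zero, sub_eq_zero]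
  simp [hr.ne']

theorem horizonPoly_neg_iff (hr : 0 < r) :
    horizonPoly Λ b K M r < 0 ↔ horizonMass Λ b K r < M := by
  rw [horizonPoly_eq_mul_horizonMass_sub hr.ne', ← sub_neg (a := horizonMass Λ b K r)]
  exact ⟨fun h => neg_of_mul_neg_right h (by positivity), mul_neg_of_pos_of_neg (by positivity)⟩

theorem hasDerivAt_horizonMass (hr : r ≠ 0) :
    HasDerivAt (horizonMass Λ b K) (-(Λ * r ^ 4 - b * r ^ 2 + K) / (2 * r ^ 2)) r := by
  have hnum : HasDerivAt (fun r : ℝ => b * r ^ 2 - Λ / 3 * r ^ 4 + K)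
      (b * (2 * r) - Λ / 3 * (4 * r ^ 3)) r := by
    refine (((hasDerivAt_pow 2 r).const_mul b).sub
      ((hasDerivAt_pow 4 r).const_mul (Λ / 3))).add_const K |>.congr_deriv ?_
    push_cast
    ring
  refine (hnum.div ((hasDerivAt_id' r).const_mul 2) (by simpa using hr)).congr_deriv ?_
  field_simp
  ring

theorem continuousOn_horizonMass : ContinuousOn (horizonMass Λ b K) (Ioi 0) :=
  fun _ hr => (hasDerivAt_horizonMass (ne_of_gt hr)).continuousAt.continuousWithinAt

theorem tendsto_horizonMass_nhdsGT_zero (hK : 0 < K) :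
    Tendsto (horizonMass Λ b K) (𝓝[>] 0) atTop := by
  have hnum : Tendsto (fun r : ℝ => (b * r ^ 2 - Λ / 3 * r ^ 4 + K) / 2) (𝓝[>] 0) (𝓝 (K / 2)) := by
    refine (Continuous.tendsto' (by fun_prop) 0 _ ?_).mono_left nhdsWithin_le_nhds
    simp
  refine (hnum.pos_mul_atTop (half_pos hK) tendsto_inv_nhdsGT_zero).congr fun r => ?_
  unfold horizonMass
  ring

theorem strictAntiOn_horizonMass {u v : ℝ} (hu : 0 < u)
    (hP : ∀ r ∈ Ioo u v, 0 < Λ * r ^ 4 - b * r ^ 2 + K) :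
    StrictAntiOn (horizonMass Λ b K) (Icc u v) := by
  refine strictAntiOn_of_deriv_neg (convex_Icc u v)
    (continuousOn_horizonMass.mono fun r hr => hu.trans_le hr.1) fun r hr => ?_
  rw [interior_Icc] at hr
  have hr0 : 0 < r := hu.trans hr.1
  rw [(hasDerivAt_horizonMass hr0.ne').deriv]
  exact div_neg_of_neg_of_pos (neg_neg_of_pos (hP r hr)) (by positivity)

theorem strictMonoOn_horizonMass {u v : ℝ} (hu : 0 < u)
    (hP : ∀ r ∈ Ioo u v, Λ * r ^ 4 - b * r ^ 2 + K < 0) :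
    StrictMonoOn (horizonMass Λ b K) (Icc u v) := by
  refine strictMonoOn_of_deriv_pos (convex_Icc u v)
    (continuousOn_horizonMass.mono fun r hr => hu.trans_le hr.1) fun r hr => ?_
  rw [interior_Icc] at hr
  have hr0 : 0 < r := hu.trans hr.1
  rw [(hasDerivAt_horizonMass hr0.ne').deriv]
  exact div_pos (neg_pos.2 (hP r hr)) (by positivity)

end HorizonPoly

theorem sq_sub_sq_mul_sq_sub_sq_neg_iff {r q₁ q₂ : ℝ} (hr : 0 ≤ r) (hq₁ : 0 ≤ q₁) (hq : q₁ ≤ q₂) :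
    (r ^ 2 - q₁ ^ 2) * (r ^ 2 - q₂ ^ 2) < 0 ↔ q₁ < r ∧ r < q₂ := by
  rw [mul_neg_iff, sub_pos, sub_neg, sub_neg, sub_pos, pow_lt_pow_iff_left₀ hq₁ hr two_ne_zero,
    pow_lt_pow_iff_left₀ hr (hq₁.trans hq) two_ne_zero,
    pow_lt_pow_iff_left₀ hr hq₁ two_ne_zero, pow_lt_pow_iff_left₀ (hq₁.trans hq) hr two_ne_zero]
  exact or_iff_left fun h => (h.1.trans (hq.trans_lt h.2)).false

theorem sq_sub_sq_mul_sq_sub_sq_pos {r q₁ q₂ : ℝ} (hr : 0 ≤ r) (hr₁ : r < q₁) (hq : q₁ ≤ q₂) :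
    0 < (r ^ 2 - q₁ ^ 2) * (r ^ 2 - q₂ ^ 2) := by
  have h₁ : r ^ 2 < q₁ ^ 2 := pow_lt_pow_left₀ hr₁ hr two_ne_zero
  have h₂ : q₁ ^ 2 ≤ q₂ ^ 2 := pow_le_pow_left₀ (hr.trans hr₁.le) hq 2
  nlinarith

theorem lt_of_sq_sub_sq_mul_sq_sub_sq_pos {r q₁ q₂ : ℝ} (hr : 0 ≤ r) (hq₁ : 0 ≤ q₁)
    (h : 0 < (r ^ 2 - q₁ ^ 2) * (r ^ 2 - q₂ ^ 2)) (hr₂ : r < q₂) : r < q₁ := by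
  by_contra! hle
  nlinarith [pow_le_pow_left₀ hq₁ hle 2, pow_lt_pow_left₀ hr₂ hr two_ne_zero]

section CriticalRadii

variable {Λ b K M q₁ q₂ : ℝ}

theorem horizonPoly_critical_eq (hb : b = Λ * (q₁ ^ 2 + q₂ ^ 2)) (hK : K = Λ * q₁ ^ 2 * q₂ ^ 2)
    (r : ℝ) : Λ * r ^ 4 - b * r ^ 2 + K = Λ * ((r ^ 2 - q₁ ^ 2) * (r ^ 2 - q₂ ^ 2)) := by
  subst hb hK
  ring

theorem horizonMass_of_critical (hq₁ : q₁ ≠ 0) (hb : b = Λ * (q₁ ^ 2 + q₂ ^ 2))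
    (hK : K = Λ * q₁ ^ 2 * q₂ ^ 2) : horizonMass Λ b K q₁ = Λ * q₁ * (q₁ ^ 2 + 3 * q₂ ^ 2) / 3 := by
  subst hb hK
  unfold horizonMass
  field_simp
  ring

theorem mul_deriv_horizonPoly_of_critical (hb : b = Λ * (q₁ ^ 2 + q₂ ^ 2))
    (hK : K = Λ * q₁ ^ 2 * q₂ ^ 2) {r : ℝ} (h : horizonPoly Λ b K M r = 0) :
    r * deriv (horizonPoly Λ b K M) r = -Λ * ((r ^ 2 - q₁ ^ 2) * (r ^ 2 - q₂ ^ 2)) := by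
  rw [mul_deriv_horizonPoly_of_eq_zero h, horizonPoly_critical_eq hb hK, neg_mul]

theorem strictAntiOn_horizonMass_of_critical (hΛ : 0 < Λ) (hq : q₁ ≤ q₂)
    (hb : b = Λ * (q₁ ^ 2 + q₂ ^ 2)) (hK : K = Λ * q₁ ^ 2 * q₂ ^ 2) {u : ℝ} (hu : 0 < u) :
    StrictAntiOn (horizonMass Λ b K) (Icc u q₁) :=
  strictAntiOn_horizonMass hu fun r hr => by
    rw [horizonPoly_critical_eq hb hK]
    exact mul_pos hΛ (sq_sub_sq_mul_sq_sub_sq_pos (hu.trans hr.1).le hr.2 hq)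

theorem strictMonoOn_horizonMass_of_critical (hΛ : 0 < Λ) (hq₁ : 0 < q₁) (hq : q₁ ≤ q₂)
    (hb : b = Λ * (q₁ ^ 2 + q₂ ^ 2)) (hK : K = Λ * q₁ ^ 2 * q₂ ^ 2) :
    StrictMonoOn (horizonMass Λ b K) (Icc q₁ q₂) :=
  strictMonoOn_horizonMass hq₁ fun r hr => by
    rw [horizonPoly_critical_eq hb hK]
    exact mul_neg_of_pos_of_neg hΛ
      ((sq_sub_sq_mul_sq_sub_sq_neg_iff (hq₁.trans hr.1).le hq₁.le hq).2 hr)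

theorem IsSubextremal.horizonMass_lt_lt (hΛ : 0 < Λ) (hq₁ : 0 < q₁) (hq : q₁ < q₂)
    (hb : b = Λ * (q₁ ^ 2 + q₂ ^ 2)) (hK : K = Λ * q₁ ^ 2 * q₂ ^ 2)
    (h : IsSubextremal (horizonPoly Λ b K M)) :
    horizonMass Λ b K q₁ < M ∧ M < horizonMass Λ b K q₂ := by
  obtain ⟨rm, rp, hrm, hrmp, hfm, hfp, hdm, hdp⟩ :=
    h.exists_deriv_neg_pos differentiable_horizonPoly
  have hrp : 0 < rp := hrm.trans hrmp
  have hPm : 0 < (rm ^ 2 - q₁ ^ 2) * (rm ^ 2 - q₂ ^ 2) := by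
    have := mul_deriv_horizonPoly_of_critical hb hK hfm
    nlinarith [mul_neg_of_pos_of_neg hrm hdm]
  have hPp : (rp ^ 2 - q₁ ^ 2) * (rp ^ 2 - q₂ ^ 2) < 0 := by
    have := mul_deriv_horizonPoly_of_critical hb hK hfp
    nlinarith [mul_pos hrp hdp]
  obtain ⟨hq₁rp, hrpq₂⟩ := (sq_sub_sq_mul_sq_sub_sq_neg_iff hrp.le hq₁.le hq.le).1 hPp
  have hrmq₁ : rm < q₁ := lt_of_sq_sub_sq_mul_sq_sub_sq_pos hrm.le hq₁.le hPm (hrmp.trans hrpq₂)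
  constructor
  · rw [← (horizonPoly_eq_zero_iff hrm).1 hfm]
    exact strictAntiOn_horizonMass_of_critical hΛ hq.le hb hK hrm ⟨le_rfl, hrmq₁.le⟩
      ⟨hrmq₁.le, le_rfl⟩ hrmq₁
  · rw [← (horizonPoly_eq_zero_iff hrp).1 hfp]
    exact strictMonoOn_horizonMass_of_critical hΛ hq₁ hq.le hb hK ⟨hq₁rp.le, hrpq₂.le⟩
      ⟨hq.le, le_rfl⟩ hrpq₂

theorem isSubextremal_horizonPoly_of_critical (hΛ : 0 < Λ) (hq₁ : 0 < q₁) (hq : q₁ < q₂)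
    (hb : b = Λ * (q₁ ^ 2 + q₂ ^ 2)) (hK : K = Λ * q₁ ^ 2 * q₂ ^ 2)
    (h₁ : horizonMass Λ b K q₁ < M) (h₂ : M < horizonMass Λ b K q₂) :
    IsSubextremal (horizonPoly Λ b K M) := by
  have hK₀ : 0 < K := by rw [hK]; have := hq₁.trans hq; positivity
  have hm₀ := tendsto_horizonMass_nhdsGT_zero (Λ := Λ) (b := b) hK₀
  obtain ⟨r₀, hr₀M, hr₀⟩ := ((hm₀.eventually_gt_atTop M).and (Ioo_mem_nhdsGT hq₁)).exists
  obtain ⟨rm, ⟨hr₀rm, hrmq₁⟩, hmm⟩ := intermediate_value_Ioo' hr₀.2.le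
    (continuousOn_horizonMass.mono fun r hr => hr₀.1.trans_le hr.1) ⟨h₁, hr₀M⟩
  obtain ⟨rp, ⟨hq₁rp, hrpq₂⟩, hmp⟩ := intermediate_value_Ioo hq.le
    (continuousOn_horizonMass.mono fun r hr => hq₁.trans_le hr.1) ⟨h₁, h₂⟩
  have hrm : 0 < rm := hr₀.1.trans hr₀rm
  have hrp : 0 < rp := hq₁.trans hq₁rp
  have hfm := (horizonPoly_eq_zero_iff hrm).2 hmm
  have hfp := (horizonPoly_eq_zero_iff hrp).2 hmp
  have deriv_ne_zero {r : ℝ} (hr : horizonPoly Λ b K M r = 0)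
      (hP : (r ^ 2 - q₁ ^ 2) * (r ^ 2 - q₂ ^ 2) ≠ 0) : deriv (horizonPoly Λ b K M) r ≠ 0 := by
    intro h0
    have := mul_deriv_horizonPoly_of_critical hb hK hr
    rw [h0, mul_zero, eq_comm, mul_eq_zero] at this
    exact this.elim (neg_ne_zero.2 hΛ.ne') hP
  refine ⟨rm, rp, hrm, hrmq₁.trans hq₁rp, hfm, hfp,
    deriv_ne_zero hfm (sq_sub_sq_mul_sq_sub_sq_pos hrm.le hrmq₁ hq.le).ne',
    deriv_ne_zero hfp ((sq_sub_sq_mul_sq_sub_sq_neg_iff hrp.le hq₁.le hq.le).2 ⟨hq₁rp, hrpq₂⟩).ne,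
    fun r ⟨hrmr, hrrp⟩ => (horizonPoly_neg_iff (hrm.trans hrmr)).2 ?_⟩
  rcases le_total r q₁ with hrq₁ | hq₁r
  · exact hmm ▸ strictAntiOn_horizonMass_of_critical hΛ hq.le hb hK hrm ⟨le_rfl, hrmq₁.le⟩
      ⟨hrmr.le, hrq₁⟩ hrmr
  · exact hmp ▸ strictMonoOn_horizonMass_of_critical hΛ hq₁ hq.le hb hK ⟨hq₁r, hrrp.le.trans
      hrpq₂.le⟩ ⟨hq₁rp.le, hrpq₂.le⟩ hrrp

end CriticalRadii

section Coefficients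

variable {Λ b K M : ℝ}

theorem exists_critical_of_discrim_pos (hΛ : 0 < Λ) (hb : 0 < b) (hK : 0 < K)
    (hD : 0 < b ^ 2 - 4 * Λ * K) :
    ∃ q₁ q₂ : ℝ, 0 < q₁ ∧ q₁ < q₂ ∧ b = Λ * (q₁ ^ 2 + q₂ ^ 2) ∧ K = Λ * q₁ ^ 2 * q₂ ^ 2 ∧
      √(b ^ 2 - 4 * Λ * K) = Λ * (q₂ ^ 2 - q₁ ^ 2) := by
  set e := √(b ^ 2 - 4 * Λ * K)
  have he : e ^ 2 = b ^ 2 - 4 * Λ * K := Real.sq_sqrt hD.le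
  have he₀ : 0 < e := Real.sqrt_pos.2 hD
  have heb : e < b := by nlinarith [mul_pos hΛ hK]
  have hs₁ : 0 < (b - e) / (2 * Λ) := div_pos (sub_pos.2 heb) (by positivity)
  have hs₂ : 0 < (b + e) / (2 * Λ) := by positivity
  refine ⟨√((b - e) / (2 * Λ)), √((b + e) / (2 * Λ)), Real.sqrt_pos.2 hs₁,
    Real.sqrt_lt_sqrt hs₁.le (by gcongr; linarith), ?_⟩
  rw [Real.sq_sqrt hs₁.le, Real.sq_sqrt hs₂.le]
  refine ⟨?_, ?_, ?_⟩ <;> field_simp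
  · ring
  · linear_combination he
  · ring

theorem IsSubextremal.pos_and_discrim_pos (hΛ : 0 < Λ) (hK : 0 < K)
    (h : IsSubextremal (horizonPoly Λ b K M)) : 0 < b ∧ 0 < b ^ 2 - 4 * Λ * K := by
  obtain ⟨rm, rp, hrm, hrmp, -, hfp, -, hdp⟩ := h.exists_deriv_neg_pos differentiable_horizonPoly
  have hrp : 0 < rp := hrm.trans hrmp
  have hP : Λ * rp ^ 4 - b * rp ^ 2 + K < 0 := by
    have := mul_deriv_horizonPoly_of_eq_zero hfp
    nlinarith [mul_pos hrp hdp]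
  constructor
  · nlinarith [mul_pos hΛ (pow_pos hrp 4), pow_pos hrp 2]
  · nlinarith [sq_nonneg (2 * Λ * rp ^ 2 - b)]

theorem isSubextremal_horizonPoly_iff (hΛ : 0 < Λ) (hK : 0 < K) (hM : 0 < M) :
    IsSubextremal (horizonPoly Λ b K M) ↔ 0 < b ∧ 0 < b ^ 2 - 4 * Λ * K ∧
      2 * (b ^ 3 + 12 * Λ * b * K - (b ^ 2 - 4 * Λ * K) * √(b ^ 2 - 4 * Λ * K)) < 36 * Λ * M ^ 2 ∧
      36 * Λ * M ^ 2 <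
        2 * (b ^ 3 + 12 * Λ * b * K + (b ^ 2 - 4 * Λ * K) * √(b ^ 2 - 4 * Λ * K)) := by
  by_cases hbD : 0 < b ∧ 0 < b ^ 2 - 4 * Λ * K
  swap
  · exact iff_of_false (fun h => hbD (h.pos_and_discrim_pos hΛ hK)) fun h => hbD ⟨h.1, h.2.1⟩
  obtain ⟨q₁, q₂, hq₁, hq, hb, hK', he⟩ := exists_critical_of_discrim_pos hΛ hbD.1 hK hbD.2
  have hq₂ : 0 < q₂ := hq₁.trans hq
  have hm₁ := horizonMass_of_critical hq₁.ne' hb hK'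
  have hm₂ := horizonMass_of_critical (b := b) (K := K) (q₂ := q₁) hq₂.ne'
    (by rw [hb]; ring) (by rw [hK']; ring)
  have hX₁ : 2 * (b ^ 3 + 12 * Λ * b * K - (b ^ 2 - 4 * Λ * K) * (Λ * (q₂ ^ 2 - q₁ ^ 2))) =
      36 * Λ * horizonMass Λ b K q₁ ^ 2 := by
    rw [hm₁, hb, hK']
    ring
  have hX₂ : 2 * (b ^ 3 + 12 * Λ * b * K + (b ^ 2 - 4 * Λ * K) * (Λ * (q₂ ^ 2 - q₁ ^ 2))) =
      36 * Λ * horizonMass Λ b K q₂ ^ 2 := by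
    rw [hm₂, hb, hK']
    ring
  simp only [hbD.1, hbD.2, true_and]
  rw [he, hX₁, hX₂, mul_lt_mul_iff_right₀ (by positivity), mul_lt_mul_iff_right₀ (by positivity),
    pow_lt_pow_iff_left₀ (hm₁ ▸ by positivity) hM.le two_ne_zero,
    pow_lt_pow_iff_left₀ hM.le (hm₂ ▸ by positivity) two_ne_zero]
  exact ⟨fun h => h.horizonMass_lt_lt hΛ hq₁ hq hb hK',
    fun h => isSubextremal_horizonPoly_of_critical hΛ hq₁ hq hb hK' h.1 h.2⟩

end Coefficients

theorem rpow_three_halves {x : ℝ} (hx : 0 ≤ x) : x ^ (3 / 2 : ℝ) = x * √x := by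
  rw [show (3 / 2 : ℝ) = 1 + 1 / 2 by norm_num, Real.rpow_add' hx (by norm_num), Real.rpow_one,
    Real.sqrt_eq_rpow]

theorem deltaR_eq_horizonPoly (M Λ a Q : ℝ) :
    DeltaR M Λ a Q =
      horizonPoly Λ (1 - Λ * a ^ 2 / 3) (a ^ 2 + (1 + Λ * a ^ 2 / 3) ^ 2 * Q ^ 2) M := by
  funext r
  unfold DeltaR horizonPoly
  ring

section KerrNewmanDeSitter

variable {Λ b K : ℝ}

theorem discrim_rpow_three_halves (hΛ : 0 < Λ) (hD : 0 ≤ b ^ 2 - 4 * Λ * K) :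
    ((-3 * b / Λ) ^ 2 + 12 * (-(3 / Λ) * K)) ^ (3 / 2 : ℝ) =
      27 * (b ^ 2 - 4 * Λ * K) * √(b ^ 2 - 4 * Λ * K) / Λ ^ 3 := by
  rw [show (-3 * b / Λ) ^ 2 + 12 * (-(3 / Λ) * K) = (3 / Λ) ^ 2 * (b ^ 2 - 4 * Λ * K) by
      field_simp; ring,
    rpow_three_halves (by positivity), Real.sqrt_mul (by positivity), Real.sqrt_sq (by positivity)]
  field_simp
  ring

theorem sq_mul_Xminus_eq (hΛ : 0 < Λ) (hD : 0 ≤ b ^ 2 - 4 * Λ * K) :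
    Λ ^ 2 * (2 / 27 * (-(-3 * b / Λ) ^ 3 + 36 * (-3 * b / Λ) * (-(3 / Λ) * K) -
      ((-3 * b / Λ) ^ 2 + 12 * (-(3 / Λ) * K)) ^ (3 / 2 : ℝ))) =
      2 * (b ^ 3 + 12 * Λ * b * K - (b ^ 2 - 4 * Λ * K) * √(b ^ 2 - 4 * Λ * K)) / Λ := by
  rw [discrim_rpow_three_halves hΛ hD]
  field_simp
  ring

theorem sq_mul_Xplus_eq (hΛ : 0 < Λ) (hD : 0 ≤ b ^ 2 - 4 * Λ * K) :
    Λ ^ 2 * (2 / 27 * (-(-3 * b / Λ) ^ 3 + 36 * (-3 * b / Λ) * (-(3 / Λ) * K) +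
      ((-3 * b / Λ) ^ 2 + 12 * (-(3 / Λ) * K)) ^ (3 / 2 : ℝ))) =
      2 * (b ^ 3 + 12 * Λ * b * K + (b ^ 2 - 4 * Λ * K) * √(b ^ 2 - 4 * Λ * K)) / Λ := by
  rw [discrim_rpow_three_halves hΛ hD]
  field_simp
  ring

end KerrNewmanDeSitter

theorem stmt4 (M Λ a Q : ℝ) (hM : 0 < M) (hΛ : 0 < Λ)
    (hK : 0 < a ^ 2 + (1 + Λ * a ^ 2 / 3) ^ 2 * Q ^ 2) :
    (∃ rm rp : ℝ, 0 < rm ∧ rm < rp ∧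
        DeltaR M Λ a Q rm = 0 ∧ DeltaR M Λ a Q rp = 0 ∧
        deriv (DeltaR M Λ a Q) rm ≠ 0 ∧ deriv (DeltaR M Λ a Q) rp ≠ 0 ∧
        ∀ r ∈ Set.Ioo rm rp, DeltaR M Λ a Q r < 0) ↔
      (Λ * a ^ 2 < 3 ∧
        4 * Λ * (Λ * a ^ 2 + 3) ^ 2 * Q ^ 2 < Λ ^ 2 * a ^ 4 - 42 * Λ * a ^ 2 + 9 ∧
        Λ ^ 2 * (2 / 27 *
            (-(a ^ 2 - 3 / Λ) ^ 3 +
              36 * (a ^ 2 - 3 / Λ) *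
                (-(3 / Λ) * (a ^ 2 + (1 + Λ * a ^ 2 / 3) ^ 2 * Q ^ 2)) -
              Real.rpow
                ((a ^ 2 - 3 / Λ) ^ 2 +
                  12 * (-(3 / Λ) * (a ^ 2 + (1 + Λ * a ^ 2 / 3) ^ 2 * Q ^ 2)))
                (3 / 2))) < 36 * M ^ 2 ∧
        36 * M ^ 2 <
          Λ ^ 2 * (2 / 27 *
            (-(a ^ 2 - 3 / Λ) ^ 3 +
              36 * (a ^ 2 - 3 / Λ) *
                (-(3 / Λ) * (a ^ 2 + (1 + Λ * a ^ 2 / 3) ^ 2 * Q ^ 2)) +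
              Real.rpow
                ((a ^ 2 - 3 / Λ) ^ 2 +
                  12 * (-(3 / Λ) * (a ^ 2 + (1 + Λ * a ^ 2 / 3) ^ 2 * Q ^ 2)))
                (3 / 2)))) := by
  set K := a ^ 2 + (1 + Λ * a ^ 2 / 3) ^ 2 * Q ^ 2
  set b := 1 - Λ * a ^ 2 / 3 with hb_def
  have hA : a ^ 2 - 3 / Λ = -3 * b / Λ := by
    field_simp
    ring
  have hD : 4 * Λ * (Λ * a ^ 2 + 3) ^ 2 * Q ^ 2 < Λ ^ 2 * a ^ 4 - 42 * Λ * a ^ 2 + 9 ↔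
      0 < b ^ 2 - 4 * Λ * K := by
    have : 9 * (b ^ 2 - 4 * Λ * K) =
        Λ ^ 2 * a ^ 4 - 42 * Λ * a ^ 2 + 9 - 4 * Λ * (Λ * a ^ 2 + 3) ^ 2 * Q ^ 2 := by
      ring
    constructor <;> intro <;> linarith
  change IsSubextremal (DeltaR M Λ a Q) ↔ _
  rw [deltaR_eq_horizonPoly, ← hb_def, isSubextremal_horizonPoly_iff hΛ hK hM, hA, hD,
    Real.rpow_eq_pow]
  refine and_congr (by constructor <;> intro <;> linarith) (and_congr_right fun hD₀ => ?_)
  rw [sq_mul_Xminus_eq hΛ hD₀.le, sq_mul_Xplus_eq hΛ hD₀.le, div_lt_iff₀ hΛ, lt_div_iff₀ hΛ,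
    mul_right_comm 36 (M ^ 2) Λ]
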